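/- arXiv:2305.11599 — 8 statements merged into one kernel-verified Lean document; each statement's English description precedes it below -/
import Mathlib

section
/- Let H be an abelian group (written multiplicatively) and let End(H) denote the set of group endomorphisms of H. Then End(H) is an abelian group under the pointwise product (F₁·F₂)(h) = F₁(h)F₂(h), and the operation (F₁ * F₂)(h) = F₁(F₂(h)) · F₂(F₁(h⁻¹)) makes (End(H), ·, *) a multiplicative Lie algebra; that is, * satisfies all five multiplicative Lie algebra identities with respect to the pointwise group structure on End(H). -/
/-- A multiplicative Lie algebra structure on a group `G`: a binary operation `⋆`
satisfying the five universal identities of the commutator. -/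
def IsMulLieAlgebra {G : Type*} [Group G] (star : G → G → G) : Prop :=
  (∀ x, star x x = 1) ∧
  (∀ x y z, star x (y * z) = star x y * (y * star x z * y⁻¹)) ∧
  (∀ x y z, star (x * y) z = (x * star y z * x⁻¹) * star x z) ∧
  (∀ x y z,
    star (star x y) (y * z * y⁻¹) * star (star y z) (z * x * z⁻¹) *
      star (star z x) (x * y * x⁻¹) = 1) ∧
  (∀ x y z, z * star x y * z⁻¹ = star (z * x * z⁻¹) (z * y * z⁻¹))

/-- For an abelian group `H`, the endomorphisms `End(H) = H →* H` form an
abelian group under the pointwise product, and the operation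
`(F₁ * F₂)(h) = F₁(F₂(h)) · F₂(F₁(h⁻¹))` makes `(End(H), ·, *)` a multiplicative
Lie algebra. -/
theorem end_isMulLieAlgebra (H : Type*) [CommGroup H] :
    (∀ (F₁ F₂ : H →* H) (h : H), (F₁ * F₂) h = F₁ h * F₂ h) ∧
    ∃ star : (H →* H) → (H →* H) → (H →* H),
      (∀ (F₁ F₂ : H →* H) (h : H), star F₁ F₂ h = F₁ (F₂ h) * F₂ (F₁ (h⁻¹))) ∧
      IsMulLieAlgebra star := by
  refine ⟨fun F₁ F₂ h => rfl,
    ⟨fun F₁ F₂ => (F₁.comp F₂) * (F₂.comp F₁)⁻¹, ?_, ?_, ?_, ?_, ?_, ?_⟩⟩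
  · intro F₁ F₂ h
    simp [map_inv]
  · intro x
    ext h; simp
  · intro x y z
    ext h
    simp only [MonoidHom.mul_apply, MonoidHom.inv_apply, MonoidHom.coe_comp,
      Function.comp_apply, MonoidHom.one_apply, map_mul, map_inv, mul_inv_rev, inv_inv]
    rw [← Additive.ofMul.injective.eq_iff]
    simp only [ofMul_mul, ofMul_inv, ofMul_one]
    abel
  · intro x y z
    ext h
    simp only [MonoidHom.mul_apply, MonoidHom.inv_apply, MonoidHom.coe_comp,
      Function.comp_apply, MonoidHom.one_apply, map_mul, map_inv, mul_inv_rev, inv_inv]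
    rw [← Additive.ofMul.injective.eq_iff]
    simp only [ofMul_mul, ofMul_inv, ofMul_one]
    abel
  · intro x y z
    ext h
    simp only [MonoidHom.mul_apply, MonoidHom.inv_apply, MonoidHom.coe_comp,
      Function.comp_apply, MonoidHom.one_apply, map_mul, map_inv, mul_inv_rev, inv_inv]
    rw [← Additive.ofMul.injective.eq_iff]
    simp only [ofMul_mul, ofMul_inv, ofMul_one]
    abel
  · intro x y z
    ext h
    simp only [MonoidHom.mul_apply, MonoidHom.inv_apply, MonoidHom.coe_comp,
      Function.comp_apply, MonoidHom.one_apply, map_mul, map_inv, mul_inv_rev, inv_inv]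
    rw [← Additive.ofMul.injective.eq_iff]
    simp only [ofMul_mul, ofMul_inv, ofMul_one]
    abel
end

section
/- Let (G, ⋆) be a multiplicative Lie algebra and let H be an abelian normal subgroup of G that is an ideal (g ⋆ h ∈ H for all g ∈ G, h ∈ H) and on which ⋆ is trivial (h₁ ⋆ h₂ = 1 for all h₁, h₂ ∈ H). Then for all a ∈ H, g ∈ G and h ∈ H: (ag)h(ag)⁻¹ = ghg⁻¹ and (ag) ⋆ h = g ⋆ h. (Consequently, for an extension of H by K, the conjugation action σ and the map Γ_x(h) = t(x) ⋆ h do not depend on the choice of section t.) -/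
/-- if `H` is an abelian normal ideal of a multiplicative Lie algebra
`(G, ⋆)` on which `⋆` is trivial, then for `a ∈ H`, `g ∈ G`, `h ∈ H` we have
`(ag)h(ag)⁻¹ = ghg⁻¹` and `(ag) ⋆ h = g ⋆ h`. -/
theorem section_independence {G : Type*} [Group G] (star : G → G → G)
    (hLie : IsMulLieAlgebra star) (H : Subgroup G) (hNormal : H.Normal)
    (hAb : ∀ h₁ ∈ H, ∀ h₂ ∈ H, h₁ * h₂ = h₂ * h₁)
    (hIdeal : ∀ g : G, ∀ h ∈ H, star g h ∈ H)
    (hTriv : ∀ h₁ ∈ H, ∀ h₂ ∈ H, star h₁ h₂ = 1) :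
    ∀ a ∈ H, ∀ g : G, ∀ h ∈ H,
      (a * g) * h * (a * g)⁻¹ = g * h * g⁻¹ ∧ star (a * g) h = star g h := by
  intro a ha g h hh
  obtain ⟨-, -, h3, -, -⟩ := hLie
  constructor
  · have hgh : g * h * g⁻¹ ∈ H := hNormal.conj_mem h hh g
    have := hAb a ha (g * h * g⁻¹) hgh
    calc a * g * h * (a * g)⁻¹ = a * (g * h * g⁻¹) * a⁻¹ := by group
      _ = (g * h * g⁻¹) * a * a⁻¹ := by rw [this]
      _ = g * h * g⁻¹ := by group
  · rw [h3 a g h, hTriv a ha h hh,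
      hAb a ha (star g h) (hIdeal g h hh)]
    group
end

section
/- Let (G, ⋆) be a multiplicative Lie algebra and let H be an abelian normal subgroup of G that is an ideal (g ⋆ h ∈ H for all g ∈ G, h ∈ H) and on which ⋆ is trivial (h₁ ⋆ h₂ = 1 for all h₁, h₂ ∈ H). Then for all a, b ∈ G and h ∈ H: (a ⋆ b) ⋆ (b h b⁻¹) = (a ⋆ (b ⋆ h)) · ((a b a⁻¹) ⋆ (a ⋆ h⁻¹)). (In the split extension setting this reads Γ_{x⋆y}(σ_y(h)) = Γ_x(Γ_y(h)) · Γ_{xyx⁻¹}(Γ_x(h⁻¹)).) -/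
/-- if `H` is an abelian normal ideal of a multiplicative Lie algebra
`(G, ⋆)` on which `⋆` is trivial, then for `a, b ∈ G` and `h ∈ H`:
`(a ⋆ b) ⋆ (b h b⁻¹) = (a ⋆ (b ⋆ h)) · ((a b a⁻¹) ⋆ (a ⋆ h⁻¹))`. -/
theorem gamma_star_formula {G : Type*} [Group G] (star : G → G → G)
    (hLie : IsMulLieAlgebra star) (H : Subgroup G) (hNormal : H.Normal)
    (hAb : ∀ h₁ ∈ H, ∀ h₂ ∈ H, h₁ * h₂ = h₂ * h₁)
    (hIdeal : ∀ g : G, ∀ h ∈ H, star g h ∈ H)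
    (hTriv : ∀ h₁ ∈ H, ∀ h₂ ∈ H, star h₁ h₂ = 1) :
    ∀ a b : G, ∀ h ∈ H,
      star (star a b) (b * h * b⁻¹) =
        star a (star b h) * star (a * b * a⁻¹) (star a (h⁻¹)) := by
  obtain ⟨h1, h2, h3, h4, h5⟩ := hLie
  have star_one : ∀ x, star x 1 = 1 := by
    intro x
    have e := h2 x 1 1
    simp only [mul_one, one_mul, inv_one] at e
    exact (left_eq_mul.mp e)
  have skew : ∀ x y, star y x = (star x y)⁻¹ := by
    intro x y
    have e1 : star y (x * y) = star y x := by
      rw [h2, h1]; group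
    have e2 : star x (x * y) = x * star x y * x⁻¹ := by
      rw [h2, h1]; group
    have e3 := h3 x y (x * y)
    rw [h1, e1, e2] at e3
    have e4 : x * (star y x * star x y) * x⁻¹ = 1 := by
      calc x * (star y x * star x y) * x⁻¹
          = (x * star y x * x⁻¹) * (x * star x y * x⁻¹) := by group
        _ = 1 := e3.symm
    have e5 : star y x * star x y = 1 := by
      have := congrArg (fun g => x⁻¹ * g * x) e4
      simpa [mul_assoc] using this
    exact eq_inv_of_mul_eq_one_left e5
  have inv_right : ∀ x y, star x y⁻¹ = y⁻¹ * (star x y)⁻¹ * y := by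
    intro x y
    have e := h2 x y y⁻¹
    rw [mul_inv_cancel, star_one] at e
    have e2 : y * star x y⁻¹ * y⁻¹ = (star x y)⁻¹ :=
      eq_inv_of_mul_eq_one_right e.symm
    have := congrArg (fun g => y⁻¹ * g * y) e2
    simpa [mul_assoc] using this
  intro a b h hH
  -- memberships
  have hbhH : star b h ∈ H := hIdeal b h hH
  have hahH : star a h ∈ H := hIdeal a h hH
  have hsH : star a (star b h) ∈ H := hIdeal a _ hbhH
  have hahinv : star a h⁻¹ = (star a h)⁻¹ := by
    rw [inv_right]
    rw [hAb h⁻¹ (inv_mem hH) (star a h)⁻¹ (inv_mem hahH)]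
    group
  have hah'H : star a h⁻¹ ∈ H := by rw [hahinv]; exact inv_mem hahH
  have htH : star (a * b * a⁻¹) (star a h⁻¹) ∈ H := hIdeal _ _ hah'H
  -- T2 = (star a (star b h))⁻¹
  have T2 : star (star b h) (h * a * h⁻¹) = (star a (star b h))⁻¹ := by
    have s1 : star (star b h) (a * h⁻¹) = star (star b h) a := by
      rw [h2, hTriv _ hbhH h⁻¹ (inv_mem hH)]; group
    have s2 : star (star b h) (h * a * h⁻¹) = h * star (star b h) a * h⁻¹ := by
      rw [mul_assoc, h2, hTriv _ hbhH h hH, s1]; group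
    rw [s2, skew a (star b h)]
    rw [hAb h hH (star a (star b h))⁻¹ (inv_mem hsH)]
    group
  -- T3 = (star (a*b*a⁻¹) (star a h⁻¹))⁻¹
  have T3 : star (star h a) (a * b * a⁻¹)
      = (star (a * b * a⁻¹) (star a h⁻¹))⁻¹ := by
    rw [skew a h, ← hahinv, skew]
  have main := h4 a b h
  rw [T2, T3] at main
  -- main : star (star a b) (b*h*b⁻¹) * s⁻¹ * t⁻¹ = 1
  have : star (star a b) (b * h * b⁻¹)
      = star (a * b * a⁻¹) (star a h⁻¹) * star a (star b h) := by
    have := congrArg (fun g => g * (star (a * b * a⁻¹) (star a h⁻¹) * star a (star b h))) main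
    simpa [mul_assoc] using this
  rw [this, hAb _ htH _ hsH]
end

section
/- Let H be an abelian group, K a group, and G = H × K the direct product. Let ⋆ be a multiplicative Lie algebra structure on K, Γ : K → End(H) a map (written x ↦ Γ_x), and θ : K × K → H a map satisfying, for all x, y, z ∈ K and h, k, l ∈ H: (1) θ(x,1) = θ(1,x) = θ(x,x) = 1; (2) Γ_{xy}(h) = Γ_x(h)·Γ_y(h) and Γ_{x⋆y}(h) = Γ_x(Γ_y(h))·Γ_y(Γ_x(h⁻¹)); (3) θ(xy,z) = θ(x,z)·θ(y,z); (4) θ(x,yz) = θ(x,y)·θ(x,z); (5) Γ_{x⋆y}(l)·Γ_{y⋆z}(h)·Γ_{z⋆x}(k)·Γ_z(θ(x,y)⁻¹)·Γ_x(θ(y,z)⁻¹)·Γ_y(θ(z,x)⁻¹)·θ(x⋆y, yzy⁻¹)·θ(y⋆z, zxz⁻¹)·θ(z⋆x, xyx⁻¹) = 1; (6) θ(zxz⁻¹, zyz⁻¹) = θ(x,y). Then the operation ⋆̃ on G defined by (h,x) ⋆̃ (k,y) = (Γ_x(k)·Γ_y(h⁻¹)·θ(x,y), x ⋆ y) is a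 multiplicative Lie algebra structure on G. -/
/-- Conditions (1)–(6) on the data `(⋆, Γ, θ)` for the direct product construction. -/
def DPConditions {H K : Type*} [CommGroup H] [Group K]
    (star : K → K → K) (Γ : K → (H →* H)) (θ : K → K → H) : Prop :=
  -- (1)
  (∀ x : K, θ x 1 = 1 ∧ θ 1 x = 1 ∧ θ x x = 1) ∧
  -- (2)
  (∀ (x y : K) (h : H), Γ (x * y) h = Γ x h * Γ y h) ∧
  (∀ (x y : K) (h : H), Γ (star x y) h = Γ x (Γ y h) * Γ y (Γ x (h⁻¹))) ∧
  -- (3)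
  (∀ x y z : K, θ (x * y) z = θ x z * θ y z) ∧
  -- (4)
  (∀ x y z : K, θ x (y * z) = θ x y * θ x z) ∧
  -- (5)
  (∀ (x y z : K) (h k l : H),
    Γ (star x y) l * Γ (star y z) h * Γ (star z x) k *
        Γ z ((θ x y)⁻¹) * Γ x ((θ y z)⁻¹) * Γ y ((θ z x)⁻¹) *
        θ (star x y) (y * z * y⁻¹) * θ (star y z) (z * x * z⁻¹) *
        θ (star z x) (x * y * x⁻¹) = 1) ∧
  -- (6)
  (∀ x y z : K, θ (z * x * z⁻¹) (z * y * z⁻¹) = θ x y)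

lemma dp_aux {H : Type*} [CommGroup H] (a b c p q r t1 t2 t3 : H) :
    a⁻¹ * b * p * t1 * (c⁻¹ * a * q * t2) * (b⁻¹ * c * r * t3) =
      p * q * r * t1 * t2 * t3 := by
  calc a⁻¹ * b * p * t1 * (c⁻¹ * a * q * t2) * (b⁻¹ * c * r * t3)
      = (a⁻¹ * a) * (b * b⁻¹) * (c⁻¹ * c) * (p * q * r * t1 * t2 * t3) := by
        simp only [mul_comm, mul_left_comm, mul_assoc]
    _ = p * q * r * t1 * t2 * t3 := by simp

/-- given data `(⋆, Γ, θ)` satisfying conditions (1)–(6), the formula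
`(h,x) ⋆̃ (k,y) = (Γ_x(k)·Γ_y(h⁻¹)·θ(x,y), x ⋆ y)` defines a multiplicative Lie
algebra structure on the direct product `H × K`. -/
theorem dp_construction {H K : Type*} [CommGroup H] [Group K]
    (star : K → K → K) (Γ : K → (H →* H)) (θ : K → K → H)
    (hstar : IsMulLieAlgebra star) (hcond : DPConditions star Γ θ) :
    IsMulLieAlgebra (fun p q : H × K =>
      ((Γ p.2 q.1 * Γ q.2 (p.1⁻¹) * θ p.2 q.2, star p.2 q.2) : H × K)) := by
  obtain ⟨s1, s2, s3, s4, s5⟩ := hstar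
  obtain ⟨c1, c2, c3, c4, c5, c6, c7⟩ := hcond
  have hG1 : ∀ h : H, Γ (1 : K) h = 1 := by
    intro h
    have e := c2 1 1 h
    rw [mul_one] at e
    exact (mul_left_cancel (a := Γ (1:K) h) (by rw [mul_one]; exact e)).symm
  have hGinv : ∀ (x : K) (h : H), Γ x⁻¹ h = (Γ x h)⁻¹ := by
    intro x h
    have e := c2 x x⁻¹ h
    rw [mul_inv_cancel, hG1] at e
    exact (eq_inv_of_mul_eq_one_right e.symm)
  have hGconj : ∀ (z x : K) (h : H), Γ (z * x * z⁻¹) h = Γ x h := by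
    intro z x h
    rw [c2, c2, hGinv]
    rw [mul_comm (Γ z h), mul_assoc, mul_inv_cancel, mul_one]
  have hGstar : ∀ (x y : K) (h : H), Γ (star x y) h = 1 := by
    intro x y l
    have e1 := c6 x y 1 1 1 l
    have e2 := c6 x y 1 1 1 1
    simp only [map_one, one_mul, mul_one, mul_assoc] at e1 e2
    rw [e2, mul_one] at e1
    exact e1
  have hGcomm : ∀ (x y : K) (h : H), Γ x (Γ y h) = Γ y (Γ x h) := by
    intro x y h
    have e := c3 x y h
    rw [hGstar, map_inv, map_inv] at e
    exact (mul_inv_eq_one.mp e.symm)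
  have hcj : ∀ a b : H, a * b * a⁻¹ = b := fun a b => by
    rw [mul_comm a b, mul_inv_cancel_right]
  refine ⟨?_, ?_, ?_, ?_, ?_⟩
  · rintro ⟨h, x⟩
    simp [s1, (c1 x).2.2, Prod.ext_iff, mul_comm]
  · rintro ⟨h, x⟩ ⟨k, y⟩ ⟨l, z⟩
    simp only [Prod.mk_mul_mk, Prod.ext_iff, Prod.inv_mk, Prod.fst_one, Prod.snd_one, hcj]
    constructor
    · simp only [map_mul, c2, c5, map_inv]
      simp [mul_comm, mul_left_comm, mul_assoc]
    · exact s2 x y z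
  · rintro ⟨h, x⟩ ⟨k, y⟩ ⟨l, z⟩
    simp only [Prod.mk_mul_mk, Prod.ext_iff, Prod.inv_mk, Prod.fst_one, Prod.snd_one, hcj]
    constructor
    · simp only [map_mul, c2, c4, map_inv, mul_inv]
      simp [mul_comm, mul_left_comm, mul_assoc]
    · exact s3 x y z
  · rintro ⟨h, x⟩ ⟨k, y⟩ ⟨l, z⟩
    simp only [Prod.mk_mul_mk, Prod.ext_iff, Prod.inv_mk, Prod.fst_one, Prod.snd_one, hcj]
    constructor
    · have e := c6 x y z 1 1 1
      simp only [map_one, one_mul, map_inv] at e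
      simp only [hGconj, hGstar, map_mul, map_inv, mul_inv, inv_inv, one_mul]
      rw [hGcomm z x k, hGcomm x y l, hGcomm y z h]
      rw [dp_aux]
      exact e
    · exact s4 x y z
  · rintro ⟨h, x⟩ ⟨k, y⟩ ⟨l, z⟩
    simp only [Prod.mk_mul_mk, Prod.ext_iff, Prod.inv_mk, Prod.fst_one, Prod.snd_one, hcj]
    constructor
    · simp only [hGconj, c7]
    · exact s5 x y z
end

section
/- Let H be a finite abelian group, let K be a group generated by two elements a and b with a of finite order and gcd(|H|, ord(a)) = 1, and let G = H × K. Let ⋆̃ be a multiplicative Lie algebra structure on G such that H (identified with H × {1}) is an ideal of (G, ⋆̃) and ⋆̃ is trivial on H × {1}. Then there exist a multiplicative Lie algebra structure ⋆ on K and a map Γ : K → End(H) satisfying Γ_{xy}(h) = Γ_x(h)·Γ_y(h), Γ_{x⋆y}(h) = Γ_x(Γ_y(h))·Γ_y(Γ_x(h⁻¹)), and Γ_{x⋆y}(l)·Γ_{y⋆z}(h)·Γ_{z⋆x}(k) = 1 for all x, y, z ∈ K and h, k, l ∈ H, such that (h,x) ⋆̃ (k,y) = (Γ_x(k)·Γ_y(h⁻¹),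 x ⋆ y) for all (h,x), (k,y) ∈ G. -/
/-!
Write `(h, x) = (h, 1) (1, x)`; since `H × {1}` is central, `⋆̃` is determined by
`Γ_x k = ((1, x) ⋆̃ (k, 1)).1` and by `(1, x) ⋆̃ (1, y)`. Both `x ↦ Γ_x` and the `H`-component
`σ(x, y)` of `(1, x) ⋆̃ (1, y)` are multiplicative in each variable with values in the abelian
group `H`, so they kill `a`, whose order is prime to `|H|`. As `σ` is also alternating and
`K = ⟨a, b⟩`, `σ` vanishes and `{1} × K` is a subalgebra. Every `Γ_x` is a power of `Γ_b`, so the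
`Γ_x` commute, and then the Jacobi identity with one entry in `H` shows that `Γ` kills brackets.
-/

namespace MonoidHom

variable {K : Type*} [Group K]

theorem map_eq_one_of_coprime_orderOf {H : Type*} [Group H] (φ : K →* H) {a : K}
    (hcop : (Nat.card H).Coprime (orderOf a)) : φ a = 1 :=
  orderOf_eq_one_iff.mp <|
    Nat.eq_one_of_dvd_coprimes hcop (orderOf_dvd_natCard _) (orderOf_map_dvd φ a)

theorem mem_zpowers_of_closure_pair {a b : K} (hgen : Subgroup.closure ({a, b} : Set K) = ⊤)
    {M : Type*} [Group M] (φ : K →* M) (ha : φ a = 1) (x : K) :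
    φ x ∈ Subgroup.zpowers (φ b) := by
  have hle : Subgroup.closure ({a, b} : Set K) ≤ (Subgroup.zpowers (φ b)).comap φ := by
    rw [Subgroup.closure_le, Set.insert_subset_iff, Set.singleton_subset_iff]
    exact ⟨by simp [ha], Subgroup.mem_zpowers _⟩
  exact hle (hgen ▸ Subgroup.mem_top x)

theorem eq_one_of_apply_self_of_closure_pair {a b : K}
    (hgen : Subgroup.closure ({a, b} : Set K) = ⊤) {M : Type*} [CommGroup M] {ψ : K →* K →* M}
    (hψ : ∀ x, ψ x x = 1) (ha : ψ a = 1) : ψ = 1 := by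
  have hswap : ∀ x y, ψ y x = (ψ x y)⁻¹ := fun x y => by
    have h := hψ (x * y)
    simp only [map_mul, mul_apply, hψ, one_mul, mul_one] at h
    exact eq_inv_of_mul_eq_one_left h
  have hb : ψ b = 1 := eq_of_eqOn_dense hgen <| by
    rintro x (rfl | rfl)
    · simp [hswap, ha]
    · exact hψ x
  exact eq_of_eqOn_dense hgen <| by
    rintro x (rfl | rfl)
    · exact ha
    · exact hb

theorem apply_apply_comm_of_mem_zpowers {H : Type*} [CommGroup H] {f g g' : H →* H}
    (hg : g ∈ Subgroup.zpowers f) (hg' : g' ∈ Subgroup.zpowers f) (k : H) :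
    g (g' k) = g' (g k) := by
  obtain ⟨s, rfl⟩ := hg
  obtain ⟨t, rfl⟩ := hg'
  simp only [zpow_apply, map_zpow, ← zpow_mul, mul_comm s t]

end MonoidHom

theorem Prod.commute_mk_one {H K : Type*} [CommGroup H] [Monoid K] (k : H) (g : H × K) :
    Commute (k, (1 : K)) g :=
  Prod.ext (mul_comm k g.1) (by simp)

namespace IsMulLieAlgebra

section General

variable {G : Type*} [Group G] {star : G → G → G}

theorem star_swap (hs : IsMulLieAlgebra star) (x y : G) : star y x = (star x y)⁻¹ := by
  obtain ⟨hself, hright, hleft, -, -⟩ := hs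
  have h := hself (x * y)
  rw [hleft, hright, hright, hself, hself] at h
  refine eq_inv_of_mul_eq_one_left (conj_eq_one_iff (a := x).mp ?_)
  rw [← h]
  group

theorem star_mul_of_commute (hs : IsMulLieAlgebra star) {x y z : G} (h : Commute y (star x z)) :
    star x (y * z) = star x y * star x z := by
  rw [hs.2.1, h.eq, mul_inv_cancel_right]

theorem mul_star_of_commute (hs : IsMulLieAlgebra star) {x y z : G} (h : Commute x (star y z)) :
    star (x * y) z = star y z * star x z := by
  rw [hs.2.2.1, h.eq, mul_inv_cancel_right]

theorem of_injective {K : Type*} [Group K] {star' : K → K → K} (hs : IsMulLieAlgebra star)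
    (ι : K →* G) (hι : Function.Injective ι) (h : ∀ x y, star (ι x) (ι y) = ι (star' x y)) :
    IsMulLieAlgebra star' := by
  obtain ⟨hself, hright, hleft, hjacobi, hconj⟩ := hs
  refine ⟨fun x => hι ?_, fun x y z => hι ?_, fun x y z => hι ?_, fun x y z => hι ?_,
    fun x y z => hι ?_⟩ <;> simp only [map_mul, map_inv, map_one, ← h]
  · exact hself _
  · exact hright _ _ _
  · exact hleft _ _ _
  · exact hjacobi _ _ _
  · exact hconj _ _ _

end General

section Prod

variable {H K : Type*} [CommGroup H] [Group K] {tstar : H × K → H × K → H × K}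

def fstBracketHom (hs : IsMulLieAlgebra tstar) : K →* K →* H :=
  MonoidHom.mk'
    (fun x => MonoidHom.mk' (fun y => (tstar (1, x) (1, y)).1) fun y z => by
      have h := congrArg Prod.fst (hs.2.1 (1, x) (1, y) (1, z))
      simp only [Prod.mk_mul_mk, one_mul, Prod.fst_mul, Prod.fst_inv, inv_one, mul_one] at h
      exact h)
    fun x y => MonoidHom.ext fun z => by
      have h := congrArg Prod.fst (hs.2.2.1 (1, x) (1, y) (1, z))
      simp only [Prod.mk_mul_mk, one_mul, Prod.fst_mul, Prod.fst_inv, inv_one, mul_one] at h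
      exact h.trans (mul_comm _ _)

theorem fstBracketHom_apply_self (hs : IsMulLieAlgebra tstar) (x : K) :
    fstBracketHom hs x x = 1 :=
  congrArg Prod.fst (hs.1 (1, x))

def sndBracket (tstar : H × K → H × K → H × K) (x y : K) : K := (tstar (1, x) (1, y)).2

variable (hs : IsMulLieAlgebra tstar) (hIdeal : ∀ (g : H × K) (h : H), (tstar g (h, 1)).2 = 1)

def actionHom : K →* H →* H :=
  MonoidHom.mk'
    (fun x => MonoidHom.mk' (fun k => (tstar (1, x) (k, 1)).1) fun k l => by
      have h := hs.star_mul_of_commute (Prod.commute_mk_one k (tstar (1, x) (l, 1)))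
      rw [Prod.mk_mul_mk, mul_one] at h
      exact congrArg Prod.fst h)
    fun x y => MonoidHom.ext fun k => by
      have hcomm : Commute ((1, x) : H × K) (tstar (1, y) (k, 1)) := by
        rw [← Prod.mk.eta (p := tstar (1, y) (k, 1)), hIdeal]
        exact (Prod.commute_mk_one _ _).symm
      have h := hs.mul_star_of_commute hcomm
      rw [Prod.mk_mul_mk, one_mul] at h
      exact (congrArg Prod.fst h).trans (mul_comm _ _)

theorem star_one_mk_mk_one (x : K) (k : H) :
    tstar (1, x) (k, 1) = (actionHom hs hIdeal x k, 1) :=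
  Prod.ext rfl (hIdeal _ _)

theorem star_mk_one_one_mk (x : K) (k : H) :
    tstar (k, 1) (1, x) = ((actionHom hs hIdeal x k)⁻¹, 1) := by
  rw [hs.star_swap, star_one_mk_mk_one hs hIdeal, Prod.inv_mk, inv_one]


theorem actionHom_sndBracket (hK : ∀ x y : K, tstar (1, x) (1, y) = (1, sndBracket tstar x y))
    (x y : K) (h : H) :
    actionHom hs hIdeal (sndBracket tstar x y) h =
      actionHom hs hIdeal x (actionHom hs hIdeal y h) *
        actionHom hs hIdeal y (actionHom hs hIdeal x h⁻¹) := by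
  have hjacobi := hs.2.2.2.1 (1, x) (1, y) (h, 1)
  have hconj : ((1, x) : H × K) * (1, y) * (1, x)⁻¹ = (1, x * y * x⁻¹) := by simp
  rw [(Prod.commute_mk_one h _).symm.mul_inv_cancel, (Prod.commute_mk_one h _).mul_inv_cancel,
    hconj, hK, star_one_mk_mk_one hs hIdeal, star_one_mk_mk_one hs hIdeal,
    star_mk_one_one_mk hs hIdeal, star_mk_one_one_mk hs hIdeal, star_mk_one_one_mk hs hIdeal,
    map_mul, map_mul, map_inv (actionHom hs hIdeal) x, mul_inv_cancel_comm] at hjacobi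
  have h1 := congrArg Prod.fst hjacobi
  simp only [Prod.fst_mul, Prod.fst_one, map_inv, inv_inv] at h1
  rw [map_inv, map_inv, eq_mul_inv_iff_mul_eq, ← mul_inv_eq_one, ← h1, mul_right_comm]

theorem star_mk_mk (hK : ∀ x y : K, tstar (1, x) (1, y) = (1, sndBracket tstar x y))
    (hTriv : ∀ h₁ h₂ : H, tstar (h₁, 1) (h₂, 1) = 1) (h k : H) (x y : K) :
    tstar (h, x) (k, y) =
      (actionHom hs hIdeal x k * actionHom hs hIdeal y h⁻¹, sndBracket tstar x y) := by
  have hsplit : ∀ (k : H) (x : K), ((k, x) : H × K) = (k, 1) * (1, x) := by simp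
  rw [hsplit h, hsplit k, hs.mul_star_of_commute (Prod.commute_mk_one h _),
    hs.star_mul_of_commute (Prod.commute_mk_one k _),
    hs.star_mul_of_commute (Prod.commute_mk_one k _), hK, hTriv, star_one_mk_mk_one hs hIdeal,
    star_mk_one_one_mk hs hIdeal]
  ext <;> simp

end Prod

end IsMulLieAlgebra

theorem dp_two_generators_general {H K : Type*} [CommGroup H] [Group K]
    (a b : K) (hgen : Subgroup.closure ({a, b} : Set K) = ⊤)
    (hcop : Nat.Coprime (Nat.card H) (orderOf a))
    (tstar : H × K → H × K → H × K) (htstar : IsMulLieAlgebra tstar)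
    (hIdeal : ∀ (g : H × K) (h : H),
      tstar g (h, 1) ∈ Set.range (fun h : H => ((h, 1) : H × K)))
    (hTriv : ∀ h₁ h₂ : H, tstar (h₁, 1) (h₂, 1) = 1) :
    ∃ (star : K → K → K) (Γ : K → (H →* H)),
      IsMulLieAlgebra star ∧
      (∀ (x y : K) (h : H), Γ (x * y) h = Γ x h * Γ y h) ∧
      (∀ (x y : K) (h : H), Γ (star x y) h = Γ x (Γ y h) * Γ y (Γ x (h⁻¹))) ∧
      (∀ (x y z : K) (h k l : H),
        Γ (star x y) l * Γ (star y z) h * Γ (star z x) k = 1) ∧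
      ∀ (h k : H) (x y : K),
        tstar (h, x) (k, y) = (Γ x k * Γ y (h⁻¹), star x y) := by
  have hIdeal' : ∀ (g : H × K) (h : H), (tstar g (h, 1)).2 = 1 := fun g h => by
    obtain ⟨_, e⟩ := hIdeal g h
    rw [← e]
  have hfst : htstar.fstBracketHom = 1 :=
    MonoidHom.eq_one_of_apply_self_of_closure_pair hgen htstar.fstBracketHom_apply_self
      (MonoidHom.ext fun y => (htstar.fstBracketHom.flip y).map_eq_one_of_coprime_orderOf hcop)
  have hK : ∀ x y : K, tstar (1, x) (1, y) = (1, IsMulLieAlgebra.sndBracket tstar x y) :=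
    fun x y => Prod.ext (DFunLike.congr_fun (DFunLike.congr_fun hfst x) y) rfl
  set Γ := htstar.actionHom hIdeal'
  have hΓa : Γ a = 1 := MonoidHom.ext fun k => (Γ.flip k).map_eq_one_of_coprime_orderOf hcop
  have hΓbracket (x y : K) : Γ (IsMulLieAlgebra.sndBracket tstar x y) = 1 := by
    ext h
    rw [htstar.actionHom_sndBracket hIdeal' hK, map_inv, map_inv,
      MonoidHom.apply_apply_comm_of_mem_zpowers (Γ.mem_zpowers_of_closure_pair hgen hΓa x)
        (Γ.mem_zpowers_of_closure_pair hgen hΓa y), mul_inv_cancel, MonoidHom.one_apply]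
  refine ⟨IsMulLieAlgebra.sndBracket tstar, Γ,
    htstar.of_injective (MonoidHom.inr H K) (Prod.mk_right_injective 1) hK,
    fun x y h => by rw [map_mul, MonoidHom.mul_apply], htstar.actionHom_sndBracket hIdeal' hK,
    fun x y z h k l => by simp only [hΓbracket, MonoidHom.one_apply, mul_one],
    htstar.star_mk_mk hIdeal' hK hTriv⟩

/-- for `G = H × K` with `H` finite abelian, `K = ⟨a, b⟩`,
`a` of finite order and `gcd(|H|, ord(a)) = 1`, every multiplicative Lie algebra
structure on `G` for which `H × {1}` is an ideal with trivial bracket is given by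
`(h,x) ⋆̃ (k,y) = (Γ_x(k)·Γ_y(h⁻¹), x ⋆ y)` for a multiplicative Lie algebra
structure `⋆` on `K` and a multiplicative Lie algebra homomorphism `Γ`. -/
theorem dp_two_generators {H K : Type*} [CommGroup H] [Finite H] [Group K]
    (a b : K) (hgen : Subgroup.closure ({a, b} : Set K) = ⊤)
    (ha : IsOfFinOrder a) (hcop : Nat.Coprime (Nat.card H) (orderOf a))
    (tstar : H × K → H × K → H × K) (htstar : IsMulLieAlgebra tstar)
    (hIdeal : ∀ (g : H × K) (h : H),
      tstar g (h, 1) ∈ Set.range (fun h : H => ((h, 1) : H × K)))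
    (hTriv : ∀ h₁ h₂ : H, tstar (h₁, 1) (h₂, 1) = 1) :
    ∃ (star : K → K → K) (Γ : K → (H →* H)),
      IsMulLieAlgebra star ∧
      (∀ (x y : K) (h : H), Γ (x * y) h = Γ x h * Γ y h) ∧
      (∀ (x y : K) (h : H), Γ (star x y) h = Γ x (Γ y h) * Γ y (Γ x (h⁻¹))) ∧
      (∀ (x y z : K) (h k l : H),
        Γ (star x y) l * Γ (star y z) h * Γ (star z x) k = 1) ∧
      ∀ (h k : H) (x y : K),
        tstar (h, x) (k, y) = (Γ x k * Γ y (h⁻¹), star x y) :=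
  dp_two_generators_general a b hgen hcop tstar htstar hIdeal hTriv
end

section
/- Let H be a finite abelian group of order m and K a finite group of order n with gcd(m, n) = 1, and let G = H × K. Then for every multiplicative Lie algebra structure ⋆̃ on G, the subgroup H × {1} is an ideal of (G, ⋆̃); that is, for every a ∈ H × {1} and every g ∈ G, a ⋆̃ g ∈ H × {1}. -/
/-! Since `(a, 1)` lies in the kernel of the projection to `K`, axiom (iii) gives
`((a, 1)ⁿ ⋆ g).2 = ((a, 1) ⋆ g).2ⁿ`. Taking `n = orderOf a`, which divides `|H|`, and using
`1 ⋆ g = 1`, the order of `((a, 1) ⋆ g).2` divides both `|H|` and `|K|`, so it is `1`. -/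

namespace IsMulLieAlgebra

variable {G : Type*} [Group G] {star : G → G → G}

lemma one_star (h : IsMulLieAlgebra star) (z : G) : star 1 z = 1 := by
  have h1 := h.2.2.1 1 1 z
  simp only [one_mul, inv_one, mul_one] at h1
  exact mul_eq_left.mp h1.symm

lemma map_star_pow_of_map_eq_one {Q : Type*} [Group Q] (h : IsMulLieAlgebra star) (φ : G →* Q)
    {x : G} (hx : φ x = 1) (z : G) (n : ℕ) : φ (star (x ^ n) z) = φ (star x z) ^ n := by
  induction n with
  | zero => rw [pow_zero, h.one_star, map_one, pow_zero]
  | succ n ih =>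
    rw [pow_succ', h.2.2.1, map_mul, map_mul, map_mul, map_inv, hx, ih, pow_succ']
    group

lemma map_star_eq_one_of_coprime {Q : Type*} [Group Q] [Finite Q] (h : IsMulLieAlgebra star)
    (φ : G →* Q) {x : G} (hx : φ x = 1) (hcop : (orderOf x).Coprime (Nat.card Q)) (z : G) :
    φ (star x z) = 1 := by
  have h_order : φ (star x z) ^ orderOf x = 1 := by
    rw [← h.map_star_pow_of_map_eq_one φ hx, pow_orderOf_eq_one, h.one_star, map_one]
  have h_card : φ (star x z) ^ Nat.card Q = 1 := pow_card_eq_one'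
  simpa [hcop.gcd_eq_one] using pow_gcd_eq_one.mpr ⟨h_order, h_card⟩

end IsMulLieAlgebra

/-- if `G = H × K` with `|H| = m`, `|K| = n` and `gcd(m, n) = 1`,
then for every multiplicative Lie algebra structure `⋆̃` on `G` the subgroup
`H × {1}` is an ideal: `a ⋆̃ g ∈ H × {1}` for all `a ∈ H × {1}`, `g ∈ G`. -/
theorem coprime_ideal {H K : Type*} [CommGroup H] [Finite H] [Group K] [Finite K]
    (hcop : Nat.Coprime (Nat.card H) (Nat.card K))
    (tstar : H × K → H × K → H × K) (htstar : IsMulLieAlgebra tstar) :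
    ∀ (a : H) (g : H × K),
      tstar (a, 1) g ∈ Set.range (fun h : H => ((h, 1) : H × K)) := by
  intro a g
  have h_order : orderOf ((a, 1) : H × K) ∣ Nat.card H :=
    orderOf_dvd_of_pow_eq_one (Prod.ext pow_card_eq_one' (one_pow _))
  have h_snd : (tstar (a, 1) g).2 = 1 :=
    htstar.map_star_eq_one_of_coprime (MonoidHom.snd H K) rfl (hcop.coprime_dvd_left h_order) g
  exact ⟨(tstar (a, 1) g).1, Prod.ext rfl h_snd.symm⟩
end

section
/- Let p be an odd prime and let D_p denote the dihedral group of order 2p. Let ⋆̃ be a multiplicative Lie algebra structure on G = ℤ_p × D_p such that ℤ_p (identified with ℤ_p × {1}) is an ideal of (G, ⋆̃) and ⋆̃ is trivial on ℤ_p × {1}. Then there exists a multiplicative Lie algebra structure ⋆ on D_p such that (h,x) ⋆̃ (k,y) = (0, x ⋆ y) for all (h,x), (k,y) ∈ G; in particular the ℤ_p-component of every ⋆̃-product is 0. -/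
lemma dihedral_hom_trivial {p : ℕ} (hp : p.Prime) (hodd : Odd p)
    (φ : DihedralGroup p → Multiplicative (ZMod p))
    (hφ : ∀ x y, φ (x * y) = φ x * φ y) : ∀ x, φ x = 1 := by
  haveI := Fact.mk hp
  have hsq : ∀ t : Multiplicative (ZMod p), t * t = 1 → t = 1 := by
    intro t ht
    have h2 : t.toAdd + t.toAdd = 0 := congrArg Multiplicative.toAdd ht
    have h2' : (2 : ZMod p) * t.toAdd = 0 := by rw [two_mul]; exact h2
    have h2ne : (2 : ZMod p) ≠ 0 := by
      intro h
      have hc : ((2:ℕ) : ZMod p) = 0 := by push_cast; exact h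
      have hd : (p:ℕ) ∣ 2 := (ZMod.natCast_eq_zero_iff 2 p).mp hc
      have hpeq : p = 2 := (Nat.prime_dvd_prime_iff_eq hp Nat.prime_two).mp hd
      rw [hpeq] at hodd; exact (by decide : ¬ Odd 2) hodd
    have : t.toAdd = 0 := by
      rcases mul_eq_zero.mp h2' with h | h
      · exact absurd h h2ne
      · exact h
    have : Multiplicative.ofAdd t.toAdd = Multiplicative.ofAdd (0 : ZMod p) :=
      congrArg _ this
    simpa using this
  have h1 : φ 1 = 1 := by
    have h := hφ 1 1
    rw [one_mul] at h
    exact (mul_left_cancel (a := φ 1) (by rw [← h, mul_one])).symm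
  have hsr : ∀ i, φ (DihedralGroup.sr i) = 1 := by
    intro i
    apply hsq
    rw [← hφ, DihedralGroup.sr_mul_sr, sub_self, ← DihedralGroup.one_def, h1]
  intro x
  cases x with
  | r k =>
    have : DihedralGroup.sr 0 * DihedralGroup.sr k = DihedralGroup.r k := by
      rw [DihedralGroup.sr_mul_sr, sub_zero]
    rw [← this, hφ, hsr, hsr, one_mul]
  | sr i => exact hsr i

/-- for an odd prime `p` and `G = ℤ_p × D_p`, every multiplicative
Lie algebra structure `⋆̃` on `G` for which `ℤ_p × {1}` is an ideal with trivial
bracket comes from a multiplicative Lie algebra structure `⋆` on `D_p` via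
`(h,x) ⋆̃ (k,y) = (0, x ⋆ y)`. -/
theorem zmod_dihedral_p {p : ℕ} (hp : p.Prime) (hodd : Odd p)
    (tstar : (Multiplicative (ZMod p) × DihedralGroup p) →
      (Multiplicative (ZMod p) × DihedralGroup p) →
      (Multiplicative (ZMod p) × DihedralGroup p))
    (htstar : IsMulLieAlgebra tstar)
    (hIdeal : ∀ (g : Multiplicative (ZMod p) × DihedralGroup p)
      (h : Multiplicative (ZMod p)),
      tstar g (h, 1) ∈ Set.range (fun h : Multiplicative (ZMod p) =>
        ((h, 1) : Multiplicative (ZMod p) × DihedralGroup p)))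
    (hTriv : ∀ h₁ h₂ : Multiplicative (ZMod p), tstar (h₁, 1) (h₂, 1) = 1) :
    ∃ star : DihedralGroup p → DihedralGroup p → DihedralGroup p,
      IsMulLieAlgebra star ∧
      ∀ (h k : Multiplicative (ZMod p)) (x y : DihedralGroup p),
        tstar (h, x) (k, y) = (Multiplicative.ofAdd (0 : ZMod p), star x y) := by
  obtain ⟨h1, h2, h3, h4, h5⟩ := htstar
  -- antisymmetry
  have hanti : ∀ a b : (Multiplicative (ZMod p) × DihedralGroup p), tstar b a = (tstar a b)⁻¹ := by
    intro a b
    have H := h1 (a * b)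
    rw [h3 a b (a * b), h2 b a b, h2 a a b, h1 a, h1 b] at H
    have H' : a * (tstar b a * tstar a b) * a⁻¹ = 1 := by
      rw [← H]; group
    have : tstar b a * tstar a b = 1 := by
      have := congrArg (fun g => a⁻¹ * g * a) H'
      simpa [mul_assoc] using this
    exact eq_inv_of_mul_eq_one_left this
  -- second components of ideal brackets vanish
  have hideal2 : ∀ (g : (Multiplicative (ZMod p) × DihedralGroup p)) (h : Multiplicative (ZMod p)), (tstar g (h, 1)).2 = 1 := by
    intro g h
    obtain ⟨h', e⟩ := hIdeal g h
    rw [← e]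
  have hideal2' : ∀ (g : (Multiplicative (ZMod p) × DihedralGroup p)) (h : Multiplicative (ZMod p)), (tstar ((h, 1) : (Multiplicative (ZMod p) × DihedralGroup p)) g).2 = 1 := by
    intro g h
    rw [hanti g (h, 1), Prod.snd_inv, hideal2, inv_one]
  -- first components are multiplicative in each slot
  have hmulR : ∀ (a : (Multiplicative (ZMod p) × DihedralGroup p)) (x y : DihedralGroup p),
      (tstar a ((1 : Multiplicative (ZMod p)), x * y)).1 = (tstar a (1, x)).1 * (tstar a (1, y)).1 := by
    intro a x y
    have e : (((1 : Multiplicative (ZMod p)), x * y) : (Multiplicative (ZMod p) × DihedralGroup p)) = ((1 : Multiplicative (ZMod p)), x) * ((1 : Multiplicative (ZMod p)), y) := by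
      simp [Prod.ext_iff]
    rw [e, h2]
    simp
  have htrivR : ∀ (a : (Multiplicative (ZMod p) × DihedralGroup p)) (x : DihedralGroup p), (tstar a ((1 : Multiplicative (ZMod p)), x)).1 = 1 :=
    fun a => dihedral_hom_trivial hp hodd _ (hmulR a)
  have hmulL : ∀ (a : (Multiplicative (ZMod p) × DihedralGroup p)) (x y : DihedralGroup p),
      (tstar (((1 : Multiplicative (ZMod p)), x * y) : (Multiplicative (ZMod p) × DihedralGroup p)) a).1 = (tstar ((1 : Multiplicative (ZMod p)), x) a).1 * (tstar ((1 : Multiplicative (ZMod p)), y) a).1 := by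
    intro a x y
    have e : (((1 : Multiplicative (ZMod p)), x * y) : (Multiplicative (ZMod p) × DihedralGroup p)) = ((1 : Multiplicative (ZMod p)), x) * ((1 : Multiplicative (ZMod p)), y) := by
      simp [Prod.ext_iff]
    rw [e, h3]
    simp [mul_comm]
  have htrivL : ∀ (a : (Multiplicative (ZMod p) × DihedralGroup p)) (x : DihedralGroup p), (tstar (((1 : Multiplicative (ZMod p)), x) : (Multiplicative (ZMod p) × DihedralGroup p)) a).1 = 1 :=
    fun a => dihedral_hom_trivial hp hodd _ (hmulL a)
  -- first component always vanishes
  have hfzero : ∀ a b : (Multiplicative (ZMod p) × DihedralGroup p), (tstar a b).1 = 1 := by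
    rintro ⟨a1, a2⟩ ⟨b1, b2⟩
    have step1 : (tstar ((a1, 1) : Multiplicative (ZMod p) × DihedralGroup p) (b1, b2)).1 = 1 := by
      have h := h2 ((a1, 1) : Multiplicative (ZMod p) × DihedralGroup p) (b1, 1)
        ((1 : Multiplicative (ZMod p)), b2)
      have e : (((b1, 1) : Multiplicative (ZMod p) × DihedralGroup p) * ((1 : Multiplicative (ZMod p)), b2)) = (b1, b2) := by
        simp [Prod.ext_iff]
      rw [e] at h
      have h' := congrArg Prod.fst h
      simpa [hTriv a1 b1, htrivR] using h'
    have step2 : (tstar (((1 : Multiplicative (ZMod p)), a2) : Multiplicative (ZMod p) × DihedralGroup p) (b1, b2)).1 = 1 := by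
      have h := h2 (((1 : Multiplicative (ZMod p)), a2) : Multiplicative (ZMod p) × DihedralGroup p) (b1, 1)
        ((1 : Multiplicative (ZMod p)), b2)
      have e : (((b1, 1) : Multiplicative (ZMod p) × DihedralGroup p) * ((1 : Multiplicative (ZMod p)), b2)) = (b1, b2) := by
        simp [Prod.ext_iff]
      rw [e] at h
      have h' := congrArg Prod.fst h
      simpa [htrivL _ a2, htrivR] using h'
    have h := h3 ((a1, 1) : Multiplicative (ZMod p) × DihedralGroup p)
      ((1 : Multiplicative (ZMod p)), a2) (b1, b2)
    have e : (((a1, 1) : Multiplicative (ZMod p) × DihedralGroup p) * ((1 : Multiplicative (ZMod p)), a2)) = (a1, a2) := by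
      simp [Prod.ext_iff]
    rw [e] at h
    have h' := congrArg Prod.fst h
    simpa [step1, step2] using h'
  -- second component depends only on the DihedralGroup components
  have hsnd : ∀ (h k : Multiplicative (ZMod p)) (x y : DihedralGroup p),
      (tstar ((h, x) : Multiplicative (ZMod p) × DihedralGroup p) (k, y)).2 =
        (tstar ((1 : Multiplicative (ZMod p)), x) ((1 : Multiplicative (ZMod p)), y)).2 := by
    intro h k x y
    have step1 : (tstar (((1 : Multiplicative (ZMod p)), x) : Multiplicative (ZMod p) × DihedralGroup p) (k, y)).2 =
        (tstar ((1 : Multiplicative (ZMod p)), x) ((1 : Multiplicative (ZMod p)), y)).2 := by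
      have hh := h2 (((1 : Multiplicative (ZMod p)), x) : Multiplicative (ZMod p) × DihedralGroup p) (k, 1)
        ((1 : Multiplicative (ZMod p)), y)
      have e : (((k, 1) : Multiplicative (ZMod p) × DihedralGroup p) * ((1 : Multiplicative (ZMod p)), y)) = (k, y) := by
        simp [Prod.ext_iff]
      rw [e] at hh
      have h' := congrArg Prod.snd hh
      simpa [hideal2] using h'
    have hh := h3 ((h, 1) : Multiplicative (ZMod p) × DihedralGroup p)
      ((1 : Multiplicative (ZMod p)), x) (k, y)
    have e : (((h, 1) : Multiplicative (ZMod p) × DihedralGroup p) * ((1 : Multiplicative (ZMod p)), x)) = (h, x) := by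
      simp [Prod.ext_iff]
    rw [e] at hh
    have h' := congrArg Prod.snd hh
    simp only [Prod.snd_mul, Prod.snd_inv, hideal2'] at h'
    simpa [step1] using h'
  have heq : ∀ (h k : Multiplicative (ZMod p)) (x y : DihedralGroup p),
      tstar ((h, x) : Multiplicative (ZMod p) × DihedralGroup p) (k, y) =
        (Multiplicative.ofAdd (0 : ZMod p),
          (tstar ((1 : Multiplicative (ZMod p)), x) ((1 : Multiplicative (ZMod p)), y)).2) := by
    intro h k x y
    have e : tstar ((h, x) : Multiplicative (ZMod p) × DihedralGroup p) (k, y) =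
        ((tstar ((h, x) : Multiplicative (ZMod p) × DihedralGroup p) (k, y)).1,
         (tstar ((h, x) : Multiplicative (ZMod p) × DihedralGroup p) (k, y)).2) := rfl
    rw [e, hfzero, hsnd]
    rfl
  refine ⟨fun x y => (tstar ((1 : Multiplicative (ZMod p)), x)
      ((1 : Multiplicative (ZMod p)), y)).2, ⟨?_, ?_, ?_, ?_, ?_⟩,
    fun h k x y => heq h k x y⟩
  · intro x
    have hh := h1 (((1 : Multiplicative (ZMod p)), x) : Multiplicative (ZMod p) × DihedralGroup p)
    have := congrArg Prod.snd hh
    simpa using this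
  · intro x y z
    have hh := h2 (((1 : Multiplicative (ZMod p)), x) : Multiplicative (ZMod p) × DihedralGroup p)
      ((1 : Multiplicative (ZMod p)), y) ((1 : Multiplicative (ZMod p)), z)
    simp only [Prod.mk_mul_mk, Prod.inv_mk, one_mul, mul_one, inv_one] at hh
    have := congrArg Prod.snd hh
    simpa using this
  · intro x y z
    have hh := h3 (((1 : Multiplicative (ZMod p)), x) : Multiplicative (ZMod p) × DihedralGroup p)
      ((1 : Multiplicative (ZMod p)), y) ((1 : Multiplicative (ZMod p)), z)
    simp only [Prod.mk_mul_mk, Prod.inv_mk, one_mul, mul_one, inv_one] at hh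
    have := congrArg Prod.snd hh
    simpa using this
  · intro x y z
    have hh := h4 (((1 : Multiplicative (ZMod p)), x) : Multiplicative (ZMod p) × DihedralGroup p)
      ((1 : Multiplicative (ZMod p)), y) ((1 : Multiplicative (ZMod p)), z)
    simp only [Prod.mk_mul_mk, Prod.inv_mk, one_mul, mul_one, inv_one] at hh
    rw [heq 1 1 x y, heq 1 1 y z, heq 1 1 z x] at hh
    have := congrArg Prod.snd hh
    simp only [Prod.snd_mul, ofAdd_zero] at this
    simpa using this
  · intro x y z
    have hh := h5 (((1 : Multiplicative (ZMod p)), x) : Multiplicative (ZMod p) × DihedralGroup p)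
      ((1 : Multiplicative (ZMod p)), y) ((1 : Multiplicative (ZMod p)), z)
    simp only [Prod.mk_mul_mk, Prod.inv_mk, one_mul, mul_one, inv_one] at hh
    have := congrArg Prod.snd hh
    simpa using this
end

section
/- Let D₄ denote the dihedral group of order 8 and ℤ₄ the cyclic group of integers modulo 4 (written additively). Then there are exactly two maps θ : D₄ × D₄ → ℤ₄ that are biadditive (θ(xy,z) = θ(x,z) + θ(y,z) and θ(x,yz) = θ(x,y) + θ(x,z) for all x, y, z ∈ D₄) and alternating (θ(x,x) = 0 for all x ∈ D₄): the trivial map and one nontrivial map (which takes all its values in {0, 2}). -/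
/-- The nontrivial biadditive alternating map on `D₄`. -/
def th4 : DihedralGroup 4 → DihedralGroup 4 → ZMod 4
  | .r _, .r _ => 0
  | .r i, .sr _ => 2 * (i.val : ZMod 4)
  | .sr _, .r j => 2 * (j.val : ZMod 4)
  | .sr i, .sr j => 2 * ((i.val + j.val : ℕ) : ZMod 4)

/-- there are exactly two biadditive alternating maps
`θ : D₄ × D₄ → ℤ₄`: the trivial one, and one nontrivial map taking all its
values in `{0, 2}`. -/
theorem dihedral4_alternating_maps :
    ∃ θ₀ : DihedralGroup 4 → DihedralGroup 4 → ZMod 4,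
      (∀ x y z : DihedralGroup 4, θ₀ (x * y) z = θ₀ x z + θ₀ y z) ∧
      (∀ x y z : DihedralGroup 4, θ₀ x (y * z) = θ₀ x y + θ₀ x z) ∧
      (∀ x : DihedralGroup 4, θ₀ x x = 0) ∧
      θ₀ ≠ (fun _ _ => 0) ∧
      (∀ x y : DihedralGroup 4, θ₀ x y = 0 ∨ θ₀ x y = 2) ∧
      (∀ θ : DihedralGroup 4 → DihedralGroup 4 → ZMod 4,
        (∀ x y z : DihedralGroup 4, θ (x * y) z = θ x z + θ y z) →
        (∀ x y z : DihedralGroup 4, θ x (y * z) = θ x y + θ x z) →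
        (∀ x : DihedralGroup 4, θ x x = 0) →
        θ = (fun _ _ => 0) ∨ θ = θ₀) := by
  refine ⟨th4, by decide, by decide, by decide, ?_, by decide, ?_⟩
  · intro h
    exact absurd (congrFun (congrFun h (.r 1)) (.sr 0)) (by decide)
  · intro θ hl hr halt
    -- θ 1 z = 0 and θ x 1 = 0
    have h0 : ∀ z, θ (.r 0) z = 0 := by
      intro z
      have h := hl (.r 0) (.r 0) z
      rw [show (DihedralGroup.r 0 * .r 0 : DihedralGroup 4) = .r 0 by decide] at h
      exact left_eq_add.mp h
    have h0r : ∀ x, θ x (.r 0) = 0 := by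
      intro x
      have h := hr x (.r 0) (.r 0)
      rw [show (DihedralGroup.r 0 * .r 0 : DihedralGroup 4) = .r 0 by decide] at h
      exact left_eq_add.mp h
    -- 2 θ(sr 0, z) = 0 and 2 θ(x, sr 0) = 0
    have hs2 : ∀ z, θ (.sr 0) z + θ (.sr 0) z = 0 := by
      intro z
      have h := hl (.sr 0) (.sr 0) z
      rw [show (DihedralGroup.sr 0 * .sr 0 : DihedralGroup 4) = .r 0 by decide, h0] at h
      exact h.symm
    have hs2r : ∀ x, θ x (.sr 0) + θ x (.sr 0) = 0 := by
      intro x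
      have h := hr x (.sr 0) (.sr 0)
      rw [show (DihedralGroup.sr 0 * .sr 0 : DihedralGroup 4) = .r 0 by decide, h0r] at h
      exact h.symm
    -- decompositions r 3 = sr 1 * sr 0 = (sr 0 * r 1) * sr 0 and r 3 = r 2 * r 1
    have h3a : ∀ z, θ (.r 3) z = θ (.sr 0) z + θ (.r 1) z + θ (.sr 0) z := by
      intro z
      have h1 := hl (.sr 1) (.sr 0) z
      rw [show (DihedralGroup.sr 1 * .sr 0 : DihedralGroup 4) = .r 3 by decide] at h1
      have h2 := hl (.sr 0) (.r 1) z
      rw [show (DihedralGroup.sr 0 * .r 1 : DihedralGroup 4) = .sr 1 by decide] at h2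
      rw [h1, h2]
    have h3b : ∀ z, θ (.r 3) z = θ (.r 2) z + θ (.r 1) z := by
      intro z
      have h := hl (.r 2) (.r 1) z
      rwa [show (DihedralGroup.r 2 * .r 1 : DihedralGroup 4) = .r 3 by decide] at h
    have h2' : ∀ z, θ (.r 2) z = θ (.r 1) z + θ (.r 1) z := by
      intro z
      have h := hl (.r 1) (.r 1) z
      rwa [show (DihedralGroup.r 1 * .r 1 : DihedralGroup 4) = .r 2 by decide] at h
    -- 2 θ(r 1, z) = 0
    have hA2 : ∀ z, θ (.r 1) z + θ (.r 1) z = 0 := by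
      intro z
      linear_combination h3a z - h3b z - h2' z + hs2 z
    -- same on the right
    have h3ar : ∀ x, θ x (.r 3) = θ x (.sr 0) + θ x (.r 1) + θ x (.sr 0) := by
      intro x
      have h1 := hr x (.sr 1) (.sr 0)
      rw [show (DihedralGroup.sr 1 * .sr 0 : DihedralGroup 4) = .r 3 by decide] at h1
      have h2 := hr x (.sr 0) (.r 1)
      rw [show (DihedralGroup.sr 0 * .r 1 : DihedralGroup 4) = .sr 1 by decide] at h2
      rw [h1, h2]
    have h3br : ∀ x, θ x (.r 3) = θ x (.r 2) + θ x (.r 1) := by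
      intro x
      have h := hr x (.r 2) (.r 1)
      rwa [show (DihedralGroup.r 2 * .r 1 : DihedralGroup 4) = .r 3 by decide] at h
    have h2r' : ∀ x, θ x (.r 2) = θ x (.r 1) + θ x (.r 1) := by
      intro x
      have h := hr x (.r 1) (.r 1)
      rwa [show (DihedralGroup.r 1 * .r 1 : DihedralGroup 4) = .r 2 by decide] at h
    have hA2r : ∀ x, θ x (.r 1) + θ x (.r 1) = 0 := by
      intro x
      linear_combination h3ar x - h3br x - h2r' x + hs2r x
    -- reduction table in the first argument
    have L2 : ∀ z, θ (.r 2) z = 0 := fun z => by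
      linear_combination h2' z + hA2 z
    have L3 : ∀ z, θ (.r 3) z = θ (.r 1) z := fun z => by
      linear_combination h3b z + L2 z
    have S1 : ∀ z, θ (.sr 1) z = θ (.sr 0) z + θ (.r 1) z := by
      intro z
      have h := hl (.sr 0) (.r 1) z
      rwa [show (DihedralGroup.sr 0 * .r 1 : DihedralGroup 4) = .sr 1 by decide] at h
    have S2 : ∀ z, θ (.sr 2) z = θ (.sr 0) z := by
      intro z
      have h := hl (.sr 0) (.r 2) z
      rw [show (DihedralGroup.sr 0 * .r 2 : DihedralGroup 4) = .sr 2 by decide] at h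
      linear_combination h + L2 z
    have S3 : ∀ z, θ (.sr 3) z = θ (.sr 0) z + θ (.r 1) z := by
      intro z
      have h := hl (.sr 0) (.r 3) z
      rw [show (DihedralGroup.sr 0 * .r 3 : DihedralGroup 4) = .sr 3 by decide] at h
      linear_combination h + L3 z
    -- reduction table in the second argument
    have R2 : ∀ x, θ x (.r 2) = 0 := fun x => by
      linear_combination h2r' x + hA2r x
    have R3 : ∀ x, θ x (.r 3) = θ x (.r 1) := fun x => by
      linear_combination h3br x + R2 x
    have T1 : ∀ x, θ x (.sr 1) = θ x (.sr 0) + θ x (.r 1) := by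
      intro x
      have h := hr x (.sr 0) (.r 1)
      rwa [show (DihedralGroup.sr 0 * .r 1 : DihedralGroup 4) = .sr 1 by decide] at h
    have T2 : ∀ x, θ x (.sr 2) = θ x (.sr 0) := by
      intro x
      have h := hr x (.sr 0) (.r 2)
      rw [show (DihedralGroup.sr 0 * .r 2 : DihedralGroup 4) = .sr 2 by decide] at h
      linear_combination h + R2 x
    have T3 : ∀ x, θ x (.sr 3) = θ x (.sr 0) + θ x (.r 1) := by
      intro x
      have h := hr x (.sr 0) (.r 3)
      rw [show (DihedralGroup.sr 0 * .r 3 : DihedralGroup 4) = .sr 3 by decide] at h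
      linear_combination h + R3 x
    -- base values
    have hD1 : θ (.r 1) (.r 1) = 0 := halt _
    have hD2 : θ (.sr 0) (.sr 0) = 0 := halt _
    -- antisymmetry on the generators
    have hanti : θ (.r 1) (.sr 0) + θ (.sr 0) (.r 1) = 0 := by
      have h := halt (DihedralGroup.r 1 * DihedralGroup.sr 0)
      rw [hl, hr, hr, halt, halt] at h
      linear_combination h
    have hu : θ (.sr 0) (.r 1) = θ (.r 1) (.sr 0) := by
      linear_combination hanti - hA2 (.sr 0)
    -- the value t = θ(r 1, sr 0) satisfies 2t = 0, hence t = 0 or t = 2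
    have ht : θ (.r 1) (.sr 0) = 0 ∨ θ (.r 1) (.sr 0) = 2 := by
      have key : ∀ u : ZMod 4, u + u = 0 → u = 0 ∨ u = 2 := by decide
      exact key _ (hA2 (.sr 0))
    have hcase : ∀ i : ZMod 4, i = 0 ∨ i = 1 ∨ i = 2 ∨ i = 3 := by decide
    rcases ht with ht | ht
    · left
      have hu0 : θ (.sr 0) (.r 1) = 0 := hu.trans ht
      funext x y
      rcases x with i | i <;> rcases y with j | j <;>
        rcases hcase i with rfl | rfl | rfl | rfl <;>
        rcases hcase j with rfl | rfl | rfl | rfl <;>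
        simp only [h0, h0r, L2, L3, S1, S2, S3, R2, R3, T1, T2, T3, hD1, hD2, ht, hu0,
          add_zero, zero_add]
    · right
      have hu2 : θ (.sr 0) (.r 1) = 2 := hu.trans ht
      funext x y
      rcases x with i | i <;> rcases y with j | j <;>
        rcases hcase i with rfl | rfl | rfl | rfl <;>
        rcases hcase j with rfl | rfl | rfl | rfl <;>
        simp only [h0, h0r, L2, L3, S1, S2, S3, R2, R3, T1, T2, T3, hD1, hD2, ht, hu2,
          add_zero, zero_add] <;>
        decide
end
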